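/- Let A be an invertible real matrix indexed by Fin (n+1) such that the submatrix D = A.submatrix Fin.succ Fin.succ obtained by deleting the first row and first column of A is invertible, and assume (A⁻¹)₀₀ ≠ 0. Set p = A·e₀ − e₀ and q = e₀. Then A − p qᵀ is invertible, and the matrix obtained by deleting the first row and first column of (A − p qᵀ)⁻¹ equals D⁻¹. -/
import Mathlib


open Matrix

/-- **Correctness of the Sherman–Morrison-based deletion step.** Let `A` be an
invertible real matrix indexed by `Fin (n+1)` whose submatrix `D` (obtained by deleting
the first row and column) is invertible, and assume `(A⁻¹)₀₀ ≠ 0`. With `p = A·e₀ - e₀`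
and `q = e₀`, the rank-one downdate `A - p qᵀ` is invertible and deleting the first row
and column of `(A - p qᵀ)⁻¹` yields `D⁻¹`. -/
theorem sherman_morrison_deletion_step
    {n : ℕ} (A : Matrix (Fin (n + 1)) (Fin (n + 1)) ℝ) (hA : IsUnit A.det)
    (D : Matrix (Fin n) (Fin n) ℝ)
    (hD : D = A.submatrix Fin.succ Fin.succ)
    (hDinv : IsUnit D.det)
    (hA00 : A⁻¹ 0 0 ≠ 0)
    (e₀ : Fin (n + 1) → ℝ) (he₀ : e₀ = Pi.single 0 1)
    (p q : Fin (n + 1) → ℝ) (hp : p = A *ᵥ e₀ - e₀) (hq : q = e₀) :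
    IsUnit (A - vecMulVec p q).det ∧
      (A - vecMulVec p q)⁻¹.submatrix Fin.succ Fin.succ = D⁻¹ := by
  subst hp hq he₀ hD
  set D : Matrix (Fin n) (Fin n) ℝ := A.submatrix Fin.succ Fin.succ with hD
  -- the equivalence sending 0 ↦ inr (), succ j ↦ inl j
  let e : Fin (n + 1) ≃ Fin n ⊕ PUnit := (finSuccEquiv n).trans (Equiv.optionEquivSumPUnit _)
  let r : Matrix PUnit.{1} (Fin n) ℝ := Matrix.of fun _ j => A 0 j.succ
  let M : Matrix (Fin n ⊕ PUnit) (Fin n ⊕ PUnit) ℝ := fromBlocks D 0 r 1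
  have he0 : e 0 = Sum.inr PUnit.unit := by simp [e]
  have hes : ∀ j : Fin n, e j.succ = Sum.inl j := by intro j; simp [e]
  have hB : A - vecMulVec (A *ᵥ Pi.single 0 1 - Pi.single 0 1) (Pi.single 0 1)
      = M.submatrix e e := by
    ext i j
    have hmv : (A *ᵥ Pi.single (0 : Fin (n+1)) 1) i = A i 0 := by
      simp [mulVec_single]
    refine Fin.cases ?_ (fun j' => ?_) j
    · refine Fin.cases ?_ (fun i' => ?_) i <;>
        simp [vecMulVec_apply, hmv, he0, hes, M, fromBlocks, Pi.single_apply, Fin.succ_ne_zero]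
    · refine Fin.cases ?_ (fun i' => ?_) i <;>
        simp [vecMulVec_apply, hmv, he0, hes, M, r, fromBlocks,
          Pi.single_apply, Fin.succ_ne_zero, hD, submatrix_apply]
  rw [hB]
  haveI : Invertible (1 : Matrix PUnit.{1} PUnit.{1} ℝ) := invertibleOne
  haveI : Invertible D := D.invertibleOfIsUnitDet hDinv
  haveI : Invertible M := Matrix.fromBlocksZero₁₂Invertible D r 1
  have hMdet : IsUnit M.det := isUnit_det_of_invertible M
  constructor
  · rwa [det_submatrix_equiv_self]
  · rw [inv_submatrix_equiv]
    ext i j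
    have : M⁻¹ = ⅟M := (invOf_eq_nonsing_inv M).symm
    rw [submatrix_apply, submatrix_apply, this, invOf_fromBlocks_zero₁₂_eq, hes, hes,
      fromBlocks_apply₁₁, invOf_eq_nonsing_inv]
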